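/- arXiv:2310.11057 — 4 statements merged into one kernel-verified Lean document; each statement's English description precedes it below -/
import Mathlib

section
/- Let X be a quasi-symmetric representation of a reductive group G with maximal torus T and T-weights β_1,...,β_d. For any centrally symmetric polytope F-duality on δ + (1/2)Σ, the sum β_{F*}^+ over the weights positive against supporting normals of the dual face F* equals the negative of β_F^+, i.e., β_{F*}^+ = −β_F^+. -/
open scoped RealInnerProductSpace Pointwise
open Classical

noncomputable section

variable {V : Type} [NormedAddCommGroup V] [InnerProductSpace ℝ V]

/-- The exposed face of the convex body `P` on which the linear functional `⟪lam, ·⟫`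
attains its minimum; `lam` is the unit normal of the corresponding supporting hyperplane,
oriented (as in the paper) towards the half-space containing `P`. -/
def minFace (P : Set V) (lam : V) : Set V :=
  {x | x ∈ P ∧ ∀ y ∈ P, ⟪lam, x⟫ ≤ ⟪lam, y⟫}

/-- Codimension of a subset of `V`: the codimension of the direction of its affine span. -/
def setCodim (F : Set V) : ℕ :=
  Module.finrank ℝ V - Module.finrank ℝ (affineSpan ℝ F).direction

/-- `𝓛_F`: the set of unit normals `λ_B` of supporting hyperplanes `B` of `P` such that
`B ∩ P` is a facet (codimension-one face) of `P` containing `F`. -/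
def faceNormals (P F : Set V) : Set V :=
  {lam | ‖lam‖ = 1 ∧ setCodim (minFace P lam) = 1 ∧ F ⊆ minFace P lam}

/-- `𝒲_F^+`: indices of the weights pairing strictly positively with some `λ ∈ 𝓛_F`. -/
def WplusIdx {d : ℕ} (β : Fin d → V) (P F : Set V) : Finset (Fin d) :=
  Finset.univ.filter fun i => ∃ lam ∈ faceNormals P F, 0 < ⟪β i, lam⟫

/-- `β_F^+ = Σ_{β_i ∈ 𝒲_F^+} β_i`. -/
def betaPlus {d : ℕ} (β : Fin d → V) (P F : Set V) : V :=
  ∑ i ∈ WplusIdx β P F, β i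

/-- The polytope `Σ = { Σ a_i β_i : a_i ∈ [0,1] }`. -/
def SigmaPoly {d : ℕ} (β : Fin d → V) : Set V :=
  {x | ∃ a : Fin d → ℝ, (∀ i, a i ∈ Set.Icc (0 : ℝ) 1) ∧ x = ∑ i, a i • β i}

/-- The polytope `δ + (1/2)Σ`. -/
def halfSigma {d : ℕ} (β : Fin d → V) (δ : V) : Set V :=
  {x | ∃ a : Fin d → ℝ, (∀ i, a i ∈ Set.Icc (0 : ℝ) 1) ∧
    x = δ + (2⁻¹ : ℝ) • ∑ i, a i • β i}

/-- Quasi-symmetry: for every one-dimensional subspace `L ⊆ M_ℝ`, the sum of the weights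
lying on `L` vanishes. -/
def QuasiSymmetric {d : ℕ} (β : Fin d → V) : Prop :=
  ∀ L : Submodule ℝ V, Module.finrank ℝ L = 1 →
    ∑ i ∈ Finset.univ.filter (fun i => β i ∈ L), β i = 0

/-- `F` is a (proper, nonempty, exposed) face of the convex body `P`. -/
def IsFaceOf (P F : Set V) : Prop :=
  IsExposed ℝ P F ∧ F.Nonempty ∧ F ≠ P

/-- The point dual of `x` with respect to the centrally symmetric polytope with center `c`. -/
def dualPt (c x : V) : V := (2 : ℝ) • c - x

/-- The dual face `F* = -F + 2c` with respect to the center `c`. -/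
def dualFace (c : V) (F : Set V) : Set V := dualPt c '' F

/-! If a point `x` of `F` minimises both `⟪λ, ·⟫` and `⟪μ, ·⟫` on the zonotope, then a weight
with `⟪β_i, λ⟫ > 0` has coefficient `0` in `x` and one with `⟪β_i, μ⟫ < 0` has coefficient `1`,
so no weight is positive against one normal in `𝓛_F` and negative against another. Since
quasi-symmetry makes the polytope symmetric about `δ`, `𝓛_{F*} = -𝓛_F`, so `β_{F*}^+` is the sum
of the weights negative against some normal in `𝓛_F`. The remaining weights lie in the subspace
orthogonal to `𝓛_F`, and quasi-symmetry, applied line by line, makes the weights in any subspace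
sum to zero; as all weights sum to zero too, `β_{F*}^+ + β_F^+ = 0`.
-/

theorem Submodule.span_singleton_eq_iff_mem {K M : Type*} [Field K] [AddCommGroup M]
    [Module K M] {v w : M} (hw : w ≠ 0) : (K ∙ w) = (K ∙ v) ↔ w ∈ K ∙ v := by
  refine ⟨fun h => h ▸ Submodule.mem_span_singleton_self w, fun h => ?_⟩
  obtain ⟨t, rfl⟩ := Submodule.mem_span_singleton.1 h
  have ht : t ≠ 0 := by rintro rfl; exact hw (zero_smul K v)
  exact Submodule.span_singleton_smul_eq (IsUnit.mk0 t ht) v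

theorem Finset.sum_filter_add_sum_filter_add_sum_filter_not_or {ι M : Type*} [AddCommMonoid M]
    (s : Finset ι) {p q : ι → Prop} (h : ∀ i ∈ s, p i → ¬ q i) (f : ι → M) :
    ∑ i ∈ s with p i, f i + ∑ i ∈ s with q i, f i + ∑ i ∈ s with ¬(p i ∨ q i), f i
      = ∑ i ∈ s, f i := by
  rw [← Finset.sum_union (Finset.disjoint_filter.2 h), ← Finset.filter_or,
    Finset.sum_filter_add_sum_filter_not]

namespace QuasiSymmetric

variable {d : ℕ} {β : Fin d → V}

theorem sum_filter_mem_eq_zero (hqs : QuasiSymmetric β) (K : Submodule ℝ V) :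
    ∑ i ∈ Finset.univ.filter (fun i => β i ∈ K), β i = 0 := by
  set s := Finset.univ.filter (fun i => β i ∈ K ∧ β i ≠ 0)
  have hs : ∑ i ∈ Finset.univ.filter (fun i => β i ∈ K), β i = ∑ i ∈ s, β i := by
    rw [← Finset.sum_filter_ne_zero, Finset.filter_filter]
  rw [hs, ← Finset.sum_fiberwise_of_maps_to (g := fun i => ℝ ∙ β i)
    (fun i hi => Finset.mem_image_of_mem (fun i => ℝ ∙ β i) hi)]
  refine Finset.sum_eq_zero fun L hL => ?_
  obtain ⟨i, hi, rfl⟩ := Finset.mem_image.1 hL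
  obtain ⟨hiK, hi0⟩ := (Finset.mem_filter.1 hi).2
  have hfiber : s.filter (fun j => (ℝ ∙ β j) = ℝ ∙ β i)
      = Finset.univ.filter (fun j => β j ∈ ℝ ∙ β i ∧ β j ≠ 0) := by
    ext j
    simp only [s, Finset.mem_filter, Finset.mem_univ, true_and]
    constructor
    · rintro ⟨⟨-, hj0⟩, hj⟩
      exact ⟨(Submodule.span_singleton_eq_iff_mem hj0).1 hj, hj0⟩
    · rintro ⟨hj, hj0⟩
      exact ⟨⟨(Submodule.span_singleton_le_iff_mem _ _).2 hiK hj, hj0⟩,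
        (Submodule.span_singleton_eq_iff_mem hj0).2 hj⟩
  rw [hfiber, ← Finset.filter_filter, Finset.sum_filter_ne_zero]
  exact hqs _ (finrank_span_singleton hi0)

theorem sum_eq_zero (hqs : QuasiSymmetric β) : ∑ i, β i = 0 := by
  simpa using hqs.sum_filter_mem_eq_zero ⊤

end QuasiSymmetric

theorem setCodim_image_affineEquiv (e : V ≃ᵃ[ℝ] V) (S : Set V) :
    setCodim (e '' S) = setCodim S := by
  have hspan := AffineSubspace.map_span (e : V →ᵃ[ℝ] V) S
  rw [AffineEquiv.coe_toAffineMap] at hspan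
  rw [setCodim, setCodim, ← hspan, AffineSubspace.map_direction,
    AffineEquiv.linear_toAffineMap, LinearEquiv.finrank_map_eq]

theorem dualPt_eq_pointReflection (c : V) : dualPt c = AffineEquiv.pointReflection ℝ c := by
  ext x
  rw [dualPt, AffineEquiv.pointReflection_apply, vsub_eq_sub, vadd_eq_add, two_smul]
  abel

theorem dualPt_involutive (c : V) : Function.Involutive (dualPt c) := by
  intro x
  simp [dualPt]

theorem mem_dualFace {c x : V} {S : Set V} : x ∈ dualFace c S ↔ dualPt c x ∈ S := by
  rw [dualFace, (dualPt_involutive c).image_eq_preimage_symm, Set.mem_preimage]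

theorem setCodim_dualFace (c : V) (S : Set V) : setCodim (dualFace c S) = setCodim S := by
  rw [dualFace, dualPt_eq_pointReflection, setCodim_image_affineEquiv]

section CentrallySymmetric

variable {P : Set V} {c : V}

theorem minFace_neg (hP : Set.MapsTo (dualPt c) P P) (lam : V) :
    minFace P (-lam) = dualFace c (minFace P lam) := by
  have hP' : ∀ x, dualPt c x ∈ P ↔ x ∈ P := fun x =>
    ⟨fun h => dualPt_involutive c x ▸ hP h, fun h => hP h⟩
  ext x
  simp only [mem_dualFace, minFace, Set.mem_ofPred_eq, hP']
  refine and_congr_right fun _ => ⟨fun h y hy => ?_, fun h y hy => ?_⟩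
  all_goals
    have := h (dualPt c y) (hP hy)
    simp only [dualPt, inner_sub_right, inner_neg_left] at this ⊢
    linarith

theorem neg_mem_faceNormals_iff (hP : Set.MapsTo (dualPt c) P P) {F : Set V} {lam : V} :
    -lam ∈ faceNormals P F ↔ lam ∈ faceNormals P (dualFace c F) := by
  simp only [faceNormals, Set.mem_ofPred_eq, norm_neg, minFace_neg hP, setCodim_dualFace]
  refine and_congr_right fun _ => and_congr_right fun _ => ?_
  rw [dualFace, dualFace, Set.image_subset_iff, (dualPt_involutive c).image_eq_preimage_symm]

end CentrallySymmetric

theorem mem_WplusIdx_dualFace_iff {d : ℕ} {β : Fin d → V} {P : Set V} {c : V}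
    (hP : Set.MapsTo (dualPt c) P P) {F : Set V} {i : Fin d} :
    i ∈ WplusIdx β P (dualFace c F) ↔ ∃ lam ∈ faceNormals P F, ⟪β i, lam⟫ < 0 := by
  simp only [WplusIdx, Finset.mem_filter, Finset.mem_univ, true_and]
  constructor
  · rintro ⟨lam, hlam, hpos⟩
    exact ⟨-lam, (neg_mem_faceNormals_iff hP).2 hlam, by rwa [inner_neg_right, neg_lt_zero]⟩
  · rintro ⟨lam, hlam, hneg⟩
    exact ⟨-lam, (neg_mem_faceNormals_iff hP).1 (by rwa [neg_neg]),
      by rwa [inner_neg_right, neg_pos]⟩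

section HalfSigma

variable {d : ℕ} {β : Fin d → V} {δ : V}

theorem mapsTo_dualPt_halfSigma (hβ : ∑ i, β i = 0) :
    Set.MapsTo (dualPt δ) (halfSigma β δ) (halfSigma β δ) := by
  rintro _ ⟨a, ha, rfl⟩
  refine ⟨fun i => 1 - a i, fun i => ⟨by linarith [(ha i).2], by linarith [(ha i).1]⟩, ?_⟩
  simp only [sub_smul, one_smul, Finset.sum_sub_distrib, hβ, zero_sub, dualPt, smul_neg,
    two_smul]
  abel

theorem sum_update_smul (a : Fin d → ℝ) (i : Fin d) (t : ℝ) :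
    ∑ j, Function.update a i t j • β j = ∑ j, a j • β j + (t - a i) • β i := by
  have hterm : ∀ j, Function.update a i t j • β j
      = a j • β j + if j = i then (t - a i) • β i else 0 := by
    intro j
    rcases eq_or_ne j i with rfl | hj
    · simp [sub_smul]
    · simp [hj]
  simp only [hterm, Finset.sum_add_distrib, Finset.sum_ite_eq', Finset.mem_univ, if_true]

theorem sub_mul_inner_nonneg_of_mem_minFace {a : Fin d → ℝ} (ha : ∀ i, a i ∈ Set.Icc (0 : ℝ) 1)
    {lam : V} (hx : δ + (2⁻¹ : ℝ) • ∑ i, a i • β i ∈ minFace (halfSigma β δ) lam)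
    (i : Fin d) {t : ℝ} (ht : t ∈ Set.Icc (0 : ℝ) 1) :
    0 ≤ (t - a i) * ⟪β i, lam⟫ := by
  have hmem : δ + (2⁻¹ : ℝ) • ∑ j, Function.update a i t j • β j ∈ halfSigma β δ := by
    refine ⟨Function.update a i t, fun j => ?_, rfl⟩
    rcases eq_or_ne j i with rfl | hj
    · simpa using ht
    · simpa [hj] using ha j
  have := hx.2 _ hmem
  simp only [sum_update_smul, smul_add, inner_add_right, real_inner_smul_right] at this
  rw [real_inner_comm]
  nlinarith

theorem inner_nonneg_of_mem_minFace_of_pos {x lam mu : V}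
    (hlam : x ∈ minFace (halfSigma β δ) lam) (hmu : x ∈ minFace (halfSigma β δ) mu) {i : Fin d}
    (hpos : 0 < ⟪β i, lam⟫) :
    0 ≤ ⟪β i, mu⟫ := by
  obtain ⟨a, ha, rfl⟩ := hlam.1
  have h0 := sub_mul_inner_nonneg_of_mem_minFace ha hlam i (t := 0) ⟨le_rfl, zero_le_one⟩
  have h1 := sub_mul_inner_nonneg_of_mem_minFace ha hmu i (t := 1) ⟨zero_le_one, le_rfl⟩
  have hai : a i = 0 := le_antisymm (by nlinarith) (ha i).1
  simpa [hai] using h1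

end HalfSigma

/-- For a quasi-symmetric representation with weights `β_1, …, β_d` and a
face `F` of the centrally symmetric polytope `δ + (1/2)Σ` (whose center is `δ`), the weight
sum attached to the dual face satisfies `β_{F*}^+ = -β_F^+`. -/
theorem statement5 {d : ℕ} (β : Fin d → V) (hqs : QuasiSymmetric β) (δ : V) (F : Set V)
    (hF : IsFaceOf (halfSigma β δ) F) :
    betaPlus β (halfSigma β δ) (dualFace δ F) = -betaPlus β (halfSigma β δ) F := by
  obtain ⟨x, hxF⟩ := hF.2.1
  set P := halfSigma β δ
  set N := faceNormals P F
  have hP : Set.MapsTo (dualPt δ) P P := mapsTo_dualPt_halfSigma hqs.sum_eq_zero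
  have hdisj : ∀ i ∈ Finset.univ, (∃ lam ∈ N, 0 < ⟪β i, lam⟫) → ¬∃ mu ∈ N, ⟪β i, mu⟫ < 0 := by
    rintro i - ⟨lam, hlam, hpos⟩ ⟨mu, hmu, hneg⟩
    exact (inner_nonneg_of_mem_minFace_of_pos (hlam.2.2 hxF) (hmu.2.2 hxF) hpos).not_gt hneg
  have hzero : Finset.univ.filter
        (fun i => ¬((∃ lam ∈ N, 0 < ⟪β i, lam⟫) ∨ ∃ mu ∈ N, ⟪β i, mu⟫ < 0))
      = Finset.univ.filter (fun i => β i ∈ ⨅ lam ∈ N, (ℝ ∙ lam)ᗮ) := by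
    ext i
    simp only [Finset.mem_filter, Finset.mem_univ, true_and, Submodule.mem_iInf,
      Submodule.mem_orthogonal_singleton_iff_inner_left, not_or, not_exists, not_and, not_lt,
      ← forall₂_and, le_antisymm_iff]
  have hdual : WplusIdx β P (dualFace δ F)
      = Finset.univ.filter (fun i => ∃ mu ∈ N, ⟪β i, mu⟫ < 0) := by
    ext i
    simp [mem_WplusIdx_dualFace_iff hP, N]
  have hsum := Finset.sum_filter_add_sum_filter_add_sum_filter_not_or _ hdisj β
  rw [hzero, hqs.sum_filter_mem_eq_zero, add_zero, hqs.sum_eq_zero] at hsum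
  rw [betaPlus, betaPlus, hdual]
  exact eq_neg_of_add_eq_zero_right hsum
end
end

section
/- Let X be a quasi-symmetric representation of G with weight polytope Σ, and let F be a codimension-k face of δ + (1/2)Σ. Then F = { δ − (1/2)β_F^+ + Σ_{β_j ∈ 𝒲_F^0} a_j β_j : −1/2 ≤ a_j ≤ 0 }, where 𝒲_F^0 is the set of weights orthogonal to all normals of facets containing F. -/
open scoped RealInnerProductSpace Pointwise
open Classical

noncomputable section

variable {V : Type} [NormedAddCommGroup V] [InnerProductSpace ℝ V]

/-- `𝒲_F^0`: indices of the weights pairing trivially with every `λ ∈ 𝓛_F`. -/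
def WzeroIdx {d : ℕ} (β : Fin d → V) (P F : Set V) : Finset (Fin d) :=
  Finset.univ.filter fun i => ∀ lam ∈ faceNormals P F, ⟪β i, lam⟫ = 0

/-!
An exposed face of the zonotope `δ + ½Σ` is the set of minimisers of some `⟪u, ·⟫`. Its points are
the `δ + ½ Σ aᵢ βᵢ` with `aᵢ ∈ [0, 1]` forced to be `0` where `⟪u, βᵢ⟫ > 0` and `1` where
`⟪u, βᵢ⟫ < 0`, the remaining coefficients being free. The face in direction `lam` contains this one
iff every weight on which `lam` is nonzero has the same sign under `u`; pivoting `lam` within this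
cone until its orthogonal weights span a hyperplane shows that each weight with `⟪u, βᵢ⟫ ≠ 0` is
seen, with the sign it has under `u`, by some facet through the face. So `𝒲_F^0` and `𝒲_F^+`
consist of the weights with `⟪u, βᵢ⟫ = 0` and `⟪u, βᵢ⟫ > 0`. Writing each free coefficient as
`1 + 2aᵢ`, the constant part is `½ Σ_{⟪u, βᵢ⟫ ≤ 0} βᵢ = -½ β_F^+`, because quasi-symmetry makes all
the weights sum to zero.
-/

lemma min_zero_le_mul {a c : ℝ} (ha : a ∈ Set.Icc (0 : ℝ) 1) : min c 0 ≤ a * c := by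
  rcases le_total c 0 with hc | hc
  · rw [min_eq_left hc]; nlinarith [ha.2]
  · rw [min_eq_right hc]; exact mul_nonneg ha.1 hc

lemma mul_eq_min_zero_iff {a c : ℝ} :
    a * c = min c 0 ↔ (0 < c → a = 0) ∧ (c < 0 → a = 1) := by
  rcases lt_trichotomy c 0 with hc | rfl | hc
  · rw [min_eq_left hc.le, mul_left_eq_self₀]
    simp [hc, hc.ne, hc.not_gt]
  · simp
  · rw [min_eq_right hc.le, mul_eq_zero]
    simp [hc.ne', hc, hc.not_gt]

lemma minFace_smul_of_pos (P : Set V) (lam : V) {c : ℝ} (hc : 0 < c) :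
    minFace P (c • lam) = minFace P lam := by
  ext x
  simp only [minFace, Set.mem_ofPred_eq, real_inner_smul_left, mul_le_mul_iff_right₀ hc]

lemma IsExposed.exists_eq_minFace [CompleteSpace V] {P F : Set V} (hF : IsExposed ℝ P F)
    (hne : F.Nonempty) : ∃ u, F = minFace P u := by
  obtain ⟨l, rfl⟩ := hF hne
  refine ⟨-(InnerProductSpace.toDual ℝ V).symm l, ?_⟩
  ext x
  simp [minFace, inner_neg_left, InnerProductSpace.toDual_symm_apply]

section Zonotope

variable {d : ℕ}

def halfSigmaPoint (β : Fin d → V) (δ : V) (a : Fin d → ℝ) : V :=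
  δ + (2⁻¹ : ℝ) • ∑ i, a i • β i

def faceCoeffs (β : Fin d → V) (u : V) : Set (Fin d → ℝ) :=
  {a | ∀ i, a i ∈ Set.Icc (0 : ℝ) 1 ∧ (0 < ⟪u, β i⟫ → a i = 0) ∧ (⟪u, β i⟫ < 0 → a i = 1)}

variable (β : Fin d → V) (δ : V)

lemma mem_halfSigma_iff {x : V} :
    x ∈ halfSigma β δ ↔ ∃ a, (∀ i, a i ∈ Set.Icc (0 : ℝ) 1) ∧ halfSigmaPoint β δ a = x := by
  simp only [halfSigma, halfSigmaPoint, Set.mem_ofPred_eq, eq_comm]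

lemma inner_halfSigmaPoint (u : V) (a : Fin d → ℝ) :
    ⟪u, halfSigmaPoint β δ a⟫ = ⟪u, δ⟫ + 2⁻¹ * ∑ i, a i * ⟪u, β i⟫ := by
  simp [halfSigmaPoint, inner_add_right, inner_smul_right, inner_sum]

lemma halfSigmaPoint_sub_halfSigmaPoint (a b : Fin d → ℝ) :
    halfSigmaPoint β δ a - halfSigmaPoint β δ b = (2⁻¹ : ℝ) • ∑ i, (a i - b i) • β i := by
  simp only [halfSigmaPoint, add_sub_add_left_eq_sub, ← smul_sub, ← Finset.sum_sub_distrib,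
    sub_smul]

def halfSigmaMin (u : V) : ℝ := ⟪u, δ⟫ + 2⁻¹ * ∑ i, min ⟪u, β i⟫ 0

lemma halfSigmaMin_le_inner {u : V} {a : Fin d → ℝ} (ha : ∀ i, a i ∈ Set.Icc (0 : ℝ) 1) :
    halfSigmaMin β δ u ≤ ⟪u, halfSigmaPoint β δ a⟫ := by
  rw [inner_halfSigmaPoint, halfSigmaMin]
  have := Finset.sum_le_sum fun i (_ : i ∈ Finset.univ) => min_zero_le_mul (c := ⟪u, β i⟫) (ha i)
  linarith

lemma inner_eq_halfSigmaMin_iff {u : V} {a : Fin d → ℝ} (ha : ∀ i, a i ∈ Set.Icc (0 : ℝ) 1) :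
    ⟪u, halfSigmaPoint β δ a⟫ = halfSigmaMin β δ u ↔ a ∈ faceCoeffs β u := by
  rw [inner_halfSigmaPoint, halfSigmaMin, add_right_inj, mul_right_inj' (by norm_num),
    eq_comm, Finset.sum_eq_sum_iff_of_le fun i _ => min_zero_le_mul (ha i)]
  simp only [Finset.mem_univ, forall_const, faceCoeffs, Set.mem_ofPred_eq, ha, true_and]
  exact forall_congr' fun i => by rw [eq_comm, mul_eq_min_zero_iff]

def lowerVertex (u : V) : Fin d → ℝ := fun i => if ⟪u, β i⟫ < 0 then 1 else 0

lemma lowerVertex_mem_faceCoeffs (u : V) : lowerVertex β u ∈ faceCoeffs β u := fun i => by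
  by_cases h : ⟪u, β i⟫ < 0 <;> simp [lowerVertex, h, le_of_lt, not_lt_of_ge]

lemma update_mem_faceCoeffs {u : V} {a : Fin d → ℝ} (ha : a ∈ faceCoeffs β u) {i : Fin d}
    (hi : ⟪u, β i⟫ = 0) {s : ℝ} (hs : s ∈ Set.Icc (0 : ℝ) 1) :
    Function.update a i s ∈ faceCoeffs β u := fun j => by
  rcases eq_or_ne j i with rfl | hj
  · simp [hi, hs]
  · simpa [Function.update_of_ne hj] using ha j

lemma mem_minFace_iff_inner_eq {u x : V} :
    x ∈ minFace (halfSigma β δ) u ↔ x ∈ halfSigma β δ ∧ ⟪u, x⟫ = halfSigmaMin β δ u := by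
  have hmin : ∀ y ∈ halfSigma β δ, halfSigmaMin β δ u ≤ ⟪u, y⟫ := by
    intro y hy
    obtain ⟨a, ha, rfl⟩ := (mem_halfSigma_iff β δ).1 hy
    exact halfSigmaMin_le_inner β δ ha
  have hv := lowerVertex_mem_faceCoeffs β u
  have hvI : ∀ i, lowerVertex β u i ∈ Set.Icc (0 : ℝ) 1 := fun i => (hv i).1
  have hvmem : halfSigmaPoint β δ (lowerVertex β u) ∈ halfSigma β δ :=
    (mem_halfSigma_iff β δ).2 ⟨_, hvI, rfl⟩
  have hveq := (inner_eq_halfSigmaMin_iff β δ hvI).2 hv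
  refine ⟨fun ⟨hx, hxmin⟩ => ⟨hx, le_antisymm ?_ (hmin x hx)⟩,
    fun ⟨hx, hxeq⟩ => ⟨hx, fun y hy => hxeq ▸ hmin y hy⟩⟩
  exact hveq ▸ hxmin _ hvmem

lemma mem_minFace_iff {u x : V} :
    x ∈ minFace (halfSigma β δ) u ↔ ∃ a ∈ faceCoeffs β u, halfSigmaPoint β δ a = x := by
  rw [mem_minFace_iff_inner_eq, mem_halfSigma_iff]
  constructor
  · rintro ⟨⟨a, ha, rfl⟩, heq⟩
    exact ⟨a, (inner_eq_halfSigmaMin_iff β δ ha).1 heq, rfl⟩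
  · rintro ⟨a, ha, rfl⟩
    have haI : ∀ i, a i ∈ Set.Icc (0 : ℝ) 1 := fun i => (ha i).1
    exact ⟨⟨a, haI, rfl⟩, (inner_eq_halfSigmaMin_iff β δ haI).2 ha⟩

lemma mem_faceCoeffs_of_mem_minFace {u : V} {a : Fin d → ℝ}
    (ha : ∀ i, a i ∈ Set.Icc (0 : ℝ) 1) (h : halfSigmaPoint β δ a ∈ minFace (halfSigma β δ) u) :
    a ∈ faceCoeffs β u :=
  (inner_eq_halfSigmaMin_iff β δ ha).1 ((mem_minFace_iff_inner_eq β δ).1 h).2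

end Zonotope

section SignCompatible

variable {d : ℕ} (β : Fin d → V)

/-- By `minFace_subset_minFace_iff`, this says that the face of `halfSigma β δ` in direction `lam`
contains the face in direction `u`. -/
def SignCompatible (u lam : V) : Prop :=
  ∀ i, (0 < ⟪lam, β i⟫ → 0 < ⟪u, β i⟫) ∧ (⟪lam, β i⟫ < 0 → ⟪u, β i⟫ < 0)

variable {β}

lemma SignCompatible.refl (u : V) : SignCompatible β u u := fun _ => ⟨id, id⟩

lemma SignCompatible.trans {u lam mu : V} (h₁ : SignCompatible β u lam)
    (h₂ : SignCompatible β lam mu) : SignCompatible β u mu :=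
  fun i => ⟨fun h => (h₁ i).1 ((h₂ i).1 h), fun h => (h₁ i).2 ((h₂ i).2 h)⟩

lemma SignCompatible.inner_eq_zero {u lam : V} (h : SignCompatible β u lam) {i : Fin d}
    (hi : ⟪u, β i⟫ = 0) : ⟪lam, β i⟫ = 0 := by
  by_contra hne
  rcases lt_or_gt_of_ne hne with hlt | hgt
  · exact (h i).2 hlt |>.ne hi
  · exact (h i).1 hgt |>.ne' hi

lemma SignCompatible.inner_pos {u lam : V} (h : SignCompatible β u lam) {i : Fin d}
    (hu : 0 < ⟪u, β i⟫) (hlam : ⟪lam, β i⟫ ≠ 0) : 0 < ⟪lam, β i⟫ :=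
  (lt_or_gt_of_ne hlam).resolve_left fun hlt => ((h i).2 hlt).not_gt hu

variable (β) (δ : V)

lemma minFace_subset_minFace_iff (u lam : V) :
    minFace (halfSigma β δ) u ⊆ minFace (halfSigma β δ) lam ↔ SignCompatible β u lam := by
  constructor
  · intro hsub
    have hface : ∀ a ∈ faceCoeffs β u, a ∈ faceCoeffs β lam := fun a ha =>
      mem_faceCoeffs_of_mem_minFace β δ (fun i => (ha i).1)
        (hsub ((mem_minFace_iff β δ).2 ⟨a, ha, rfl⟩))
    have hv := lowerVertex_mem_faceCoeffs β u
    refine fun i => ⟨fun hpos => ?_, fun hneg => ?_⟩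
    · by_contra hu
      rcases (not_lt.1 hu).lt_or_eq with hlt | hzero
      · have := (hface _ hv i).2.1 hpos
        simp [lowerVertex, hlt] at this
      · have hw := update_mem_faceCoeffs β hv hzero (Set.right_mem_Icc.2 zero_le_one)
        have := (hface _ hw i).2.1 hpos
        simp at this
    · by_contra hu
      have := (hface _ hv i).2.2 hneg
      simp [lowerVertex, hu] at this
  · intro h x hx
    obtain ⟨a, ha, rfl⟩ := (mem_minFace_iff β δ).1 hx
    refine (mem_minFace_iff β δ).2 ⟨a, fun i => ⟨(ha i).1, fun hpos => (ha i).2.1 ((h i).1 hpos),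
      fun hneg => (ha i).2.2 ((h i).2 hneg)⟩, rfl⟩

end SignCompatible

section FaceDimension

variable {d : ℕ} (β : Fin d → V)

def zeroWeightSpan (lam : V) : Submodule ℝ V :=
  Submodule.span ℝ (β '' {i | ⟪lam, β i⟫ = 0})

lemma inner_eq_zero_of_mem_zeroWeightSpan {lam z : V} (hz : z ∈ zeroWeightSpan β lam) :
    ⟪lam, z⟫ = 0 := by
  have : zeroWeightSpan β lam ≤ LinearMap.ker (innerₛₗ ℝ lam) :=
    Submodule.span_le.2 fun _ ⟨_, hi, hv⟩ => hv ▸ hi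
  exact this hz

lemma direction_affineSpan_minFace (δ u : V) :
    (affineSpan ℝ (minFace (halfSigma β δ) u)).direction = zeroWeightSpan β u := by
  have hv := lowerVertex_mem_faceCoeffs β u
  have hvmem := (mem_minFace_iff β δ).2 ⟨_, hv, rfl⟩
  apply le_antisymm
  · rw [direction_affineSpan, vectorSpan_eq_span_vsub_set_right ℝ hvmem, Submodule.span_le]
    rintro _ ⟨x, hx, rfl⟩
    obtain ⟨a, ha, rfl⟩ := (mem_minFace_iff β δ).1 hx
    simp only [SetLike.mem_coe, vsub_eq_sub, halfSigmaPoint_sub_halfSigmaPoint]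
    refine Submodule.smul_mem _ _ (Submodule.sum_mem _ fun i _ => ?_)
    rcases lt_trichotomy ⟪u, β i⟫ 0 with h | h | h
    · simp [lowerVertex, h, (ha i).2.2 h]
    · exact Submodule.smul_mem _ _ (Submodule.subset_span ⟨i, h, rfl⟩)
    · simp [lowerVertex, h.not_gt, (ha i).2.1 h]
  · rw [zeroWeightSpan, Submodule.span_le]
    rintro _ ⟨i, hi : ⟪u, β i⟫ = 0, rfl⟩
    have hw := update_mem_faceCoeffs β hv hi (Set.right_mem_Icc.2 zero_le_one)
    have hwmem := (mem_minFace_iff β δ).2 ⟨_, hw, rfl⟩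
    have hdiff :=
      AffineSubspace.vsub_mem_direction (mem_affineSpan ℝ hwmem) (mem_affineSpan ℝ hvmem)
    have : halfSigmaPoint β δ (Function.update (lowerVertex β u) i 1) -ᵥ
        halfSigmaPoint β δ (lowerVertex β u) = (2⁻¹ : ℝ) • β i := by
      rw [vsub_eq_sub, halfSigmaPoint_sub_halfSigmaPoint, Finset.sum_eq_single i]
      · simp [lowerVertex, hi]
      · intro j _ hj; simp [Function.update_of_ne hj]
      · simp
    rw [this] at hdiff
    simpa using Submodule.smul_mem _ (2 : ℝ) hdiff

lemma setCodim_minFace (δ u : V) :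
    setCodim (minFace (halfSigma β δ) u) =
      Module.finrank ℝ V - Module.finrank ℝ (zeroWeightSpan β u) := by
  rw [setCodim, direction_affineSpan_minFace]

end FaceDimension

section FacetNormals

open Module

variable {d : ℕ} {β : Fin d → V}

variable (β) in
def weightSupport (lam : V) : Finset (Fin d) :=
  Finset.univ.filter fun i => ⟪lam, β i⟫ ≠ 0

lemma SignCompatible.weightSupport_subset {u lam : V} (h : SignCompatible β u lam) :
    weightSupport β lam ⊆ weightSupport β u := by
  intro i hi
  simp only [weightSupport, Finset.mem_filter, Finset.mem_univ, true_and] at hi ⊢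
  exact fun hu => hi (h.inner_eq_zero hu)

lemma eq_zero_of_forall_inner_eq_zero (hspan : Submodule.span ℝ (Set.range β) = ⊤) {w : V}
    (h : ∀ i, ⟪w, β i⟫ = 0) : w = 0 := by
  have hle : Submodule.span ℝ (Set.range β) ≤ LinearMap.ker (innerₛₗ ℝ w) :=
    Submodule.span_le.2 (Set.range_subset_iff.2 h)
  rw [hspan] at hle
  exact inner_self_eq_zero.1 (hle Submodule.mem_top)

lemma exists_ne_zero_inner_eq_zero [FiniteDimensional ℝ V] {lam : V} {i₀ : Fin d}
    (hi₀ : ⟪lam, β i₀⟫ ≠ 0) (hrank : finrank ℝ (zeroWeightSpan β lam) + 1 < finrank ℝ V) :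
    ∃ w ≠ 0, (∀ i, ⟪lam, β i⟫ = 0 → ⟪w, β i⟫ = 0) ∧ ⟪w, β i₀⟫ = 0 := by
  have hi₀Z : β i₀ ∉ zeroWeightSpan β lam := fun h =>
    hi₀ (inner_eq_zero_of_mem_zeroWeightSpan β h)
  have hW : zeroWeightSpan β lam ⊔ ℝ ∙ β i₀ ≠ ⊤ := by
    intro h
    have := Submodule.finrank_sup_span_singleton hi₀Z
    rw [h, finrank_top] at this
    omega
  obtain ⟨w, hwW, hw0⟩ := Submodule.exists_mem_ne_zero_of_ne_bot
    (mt Submodule.orthogonal_eq_bot_iff.1 hW)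
  refine ⟨w, hw0, fun i hi => Submodule.inner_left_of_mem_orthogonal ?_ hwW,
    Submodule.inner_left_of_mem_orthogonal
      (Submodule.mem_sup_right (Submodule.mem_span_singleton_self _)) hwW⟩
  exact Submodule.mem_sup_left (Submodule.subset_span ⟨i, hi, rfl⟩)

/-- Ratio test: moving `lam` along `w` up to the first weight that becomes orthogonal flips no
sign. -/
lemma exists_signCompatible_sub_smul {lam w : V} (hw : (weightSupport β w).Nonempty)
    (hzero : ∀ i, ⟪lam, β i⟫ = 0 → ⟪w, β i⟫ = 0) :
    ∃ r : ℝ, SignCompatible β lam (lam - r • w) ∧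
      ∃ j ∈ weightSupport β lam, j ∉ weightSupport β (lam - r • w) := by
  obtain ⟨j, hj, hjmin⟩ := Finset.exists_min_image (weightSupport β w)
    (fun i => |⟪lam, β i⟫ / ⟪w, β i⟫|) hw
  simp only [weightSupport, Finset.mem_filter, Finset.mem_univ, true_and] at hj hjmin
  set r := ⟪lam, β j⟫ / ⟪w, β j⟫
  have hbound : ∀ i, |r * ⟪w, β i⟫| ≤ |⟪lam, β i⟫| := by
    intro i
    by_cases hi : ⟪w, β i⟫ = 0
    · simp [hi]
    · calc |r * ⟪w, β i⟫| = |r| * |⟪w, β i⟫| := abs_mul _ _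
        _ ≤ |⟪lam, β i⟫ / ⟪w, β i⟫| * |⟪w, β i⟫| :=
          mul_le_mul_of_nonneg_right (hjmin i hi) (abs_nonneg _)
        _ = |⟪lam, β i⟫| := by rw [← abs_mul, div_mul_cancel₀ _ hi]
  have hinner : ∀ i, ⟪lam - r • w, β i⟫ = ⟪lam, β i⟫ - r * ⟪w, β i⟫ := fun i => by
    rw [inner_sub_left, real_inner_smul_left]
  refine ⟨r, fun i => ?_, j, by simpa [weightSupport] using mt (hzero j) hj,
    by simp [weightSupport, hinner, r, div_mul_cancel₀ _ hj]⟩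
  have := abs_le.1 (hbound i)
  rw [hinner]
  constructor
  · intro hpos
    by_contra hle
    rw [abs_of_nonpos (not_lt.1 hle)] at this
    linarith
  · intro hneg
    by_contra hge
    rw [abs_of_nonneg (not_lt.1 hge)] at this
    linarith

lemma exists_signCompatible_card_weightSupport_lt [FiniteDimensional ℝ V]
    (hspan : Submodule.span ℝ (Set.range β) = ⊤) {lam : V} {i₀ : Fin d}
    (hi₀ : ⟪lam, β i₀⟫ ≠ 0) (hrank : finrank ℝ (zeroWeightSpan β lam) + 1 < finrank ℝ V) :
    ∃ lam', SignCompatible β lam lam' ∧ ⟪lam', β i₀⟫ = ⟪lam, β i₀⟫ ∧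
      (weightSupport β lam').card < (weightSupport β lam).card := by
  obtain ⟨w, hw0, hzero, hw_i₀⟩ := exists_ne_zero_inner_eq_zero hi₀ hrank
  have hw : (weightSupport β w).Nonempty := by
    by_contra h
    refine hw0 (eq_zero_of_forall_inner_eq_zero hspan fun i => ?_)
    by_contra hi
    exact h ⟨i, by simpa [weightSupport] using hi⟩
  obtain ⟨r, hcompat, j, hj, hj'⟩ := exists_signCompatible_sub_smul hw hzero
  have hval : ⟪lam - r • w, β i₀⟫ = ⟪lam, β i₀⟫ := by
    rw [inner_sub_left, real_inner_smul_left, hw_i₀, mul_zero, sub_zero]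
  exact ⟨lam - r • w, hcompat, hval, Finset.card_lt_card
    ((Finset.ssubset_iff_of_subset hcompat.weightSupport_subset).2 ⟨j, hj, hj'⟩)⟩

lemma exists_signCompatible_finrank_zeroWeightSpan [FiniteDimensional ℝ V]
    (hspan : Submodule.span ℝ (Set.range β) = ⊤) {u : V} {i₀ : Fin d} (hi₀ : ⟪u, β i₀⟫ ≠ 0) :
    ∃ lam, SignCompatible β u lam ∧ ⟪lam, β i₀⟫ = ⟪u, β i₀⟫ ∧
      finrank ℝ (zeroWeightSpan β lam) + 1 = finrank ℝ V := by
  obtain ⟨lam, ⟨hcompat, hval⟩, hmin⟩ := exists_minimalFor_of_wellFoundedLT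
    (fun lam => SignCompatible β u lam ∧ ⟪lam, β i₀⟫ = ⟪u, β i₀⟫)
    (fun lam => (weightSupport β lam).card) ⟨u, .refl u, rfl⟩
  have hlam : ⟪lam, β i₀⟫ ≠ 0 := hval ▸ hi₀
  refine ⟨lam, hcompat, hval, le_antisymm ?_ ?_⟩
  · refine Submodule.finrank_lt fun htop => hlam ?_
    exact inner_eq_zero_of_mem_zeroWeightSpan β (htop ▸ Submodule.mem_top)
  · by_contra! hlt
    obtain ⟨lam', hcompat', hval', hcard⟩ :=
      exists_signCompatible_card_weightSupport_lt hspan hlam hlt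
    exact hcard.not_ge (hmin ⟨hcompat.trans hcompat', hval'.trans hval⟩ hcard.le)

lemma exists_mem_faceNormals_inner_ne_zero [FiniteDimensional ℝ V] (δ : V)
    (hspan : Submodule.span ℝ (Set.range β) = ⊤) {u : V} {i₀ : Fin d} (hi₀ : ⟪u, β i₀⟫ ≠ 0) :
    ∃ lam ∈ faceNormals (halfSigma β δ) (minFace (halfSigma β δ) u), ⟪lam, β i₀⟫ ≠ 0 := by
  obtain ⟨lam, hcompat, hval, hrank⟩ := exists_signCompatible_finrank_zeroWeightSpan hspan hi₀
  have hlam : lam ≠ 0 := by rintro rfl; exact hi₀ (by rw [← hval, inner_zero_left])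
  have hc : 0 < ‖lam‖⁻¹ := inv_pos.2 (norm_pos_iff.2 hlam)
  refine ⟨‖lam‖⁻¹ • lam, ⟨norm_smul_inv_norm hlam, ?_, ?_⟩, ?_⟩
  · rw [minFace_smul_of_pos _ _ hc, setCodim_minFace]
    omega
  · rw [minFace_smul_of_pos _ _ hc]
    exact (minFace_subset_minFace_iff β δ u lam).2 hcompat
  · rw [real_inner_smul_left, hval]
    exact mul_ne_zero hc.ne' hi₀

end FacetNormals

lemma QuasiSymmetric.sum_filter_mem_span_singleton {d : ℕ} {β : Fin d → V}
    (hqs : QuasiSymmetric β) (v : V) :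
    ∑ i ∈ Finset.univ.filter (fun i => β i ∈ ℝ ∙ v), β i = 0 := by
  rcases eq_or_ne v 0 with rfl | hv
  · exact Finset.sum_eq_zero fun i hi => by simpa using (Finset.mem_filter.1 hi).2
  · exact hqs _ (finrank_span_singleton hv)

/-- Group the weights by the line they span. -/
lemma QuasiSymmetric.sum_eq_zero_s6 {d : ℕ} {β : Fin d → V} (hqs : QuasiSymmetric β) :
    ∑ i, β i = 0 := by
  rw [← Finset.sum_image' (g := fun i => ℝ ∙ β i) (f := fun _ => (0 : V)) β]
  · simp
  intro i _
  rw [← hqs.sum_filter_mem_span_singleton (β i)]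
  refine (Finset.sum_subset (fun j hj => ?_) fun j hj hj' => ?_).symm
  · simp only [Finset.mem_filter, Finset.mem_univ, true_and] at hj ⊢
    exact hj ▸ Submodule.mem_span_singleton_self (β j)
  · simp only [Finset.mem_filter, Finset.mem_univ, true_and] at hj hj'
    obtain ⟨c, hc⟩ := Submodule.mem_span_singleton.1 hj
    by_contra hj0
    have hc0 : c ≠ 0 := by rintro rfl; exact hj0 (by rw [← hc, zero_smul])
    exact hj' (by rw [← hc, Submodule.span_singleton_smul_eq (IsUnit.mk0 c hc0)])

section MainTheorem

variable {d : ℕ} (β : Fin d → V) (δ : V)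

lemma signCompatible_of_mem_faceNormals {u lam : V}
    (h : lam ∈ faceNormals (halfSigma β δ) (minFace (halfSigma β δ) u)) :
    SignCompatible β u lam :=
  (minFace_subset_minFace_iff β δ u lam).1 h.2.2

lemma WzeroIdx_minFace [FiniteDimensional ℝ V] (hspan : Submodule.span ℝ (Set.range β) = ⊤)
    (u : V) : WzeroIdx β (halfSigma β δ) (minFace (halfSigma β δ) u) =
      Finset.univ.filter fun i => ⟪u, β i⟫ = 0 := by
  ext i
  simp only [WzeroIdx, Finset.mem_filter, Finset.mem_univ, true_and]
  constructor
  · intro h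
    by_contra hi
    obtain ⟨lam, hlam, hne⟩ := exists_mem_faceNormals_inner_ne_zero δ hspan hi
    exact hne (real_inner_comm lam (β i) ▸ h lam hlam)
  · intro hi lam hlam
    rw [real_inner_comm]
    exact (signCompatible_of_mem_faceNormals β δ hlam).inner_eq_zero hi

lemma WplusIdx_minFace [FiniteDimensional ℝ V] (hspan : Submodule.span ℝ (Set.range β) = ⊤)
    (u : V) : WplusIdx β (halfSigma β δ) (minFace (halfSigma β δ) u) =
      Finset.univ.filter fun i => 0 < ⟪u, β i⟫ := by
  ext i
  simp only [WplusIdx, Finset.mem_filter, Finset.mem_univ, true_and, real_inner_comm _ (β i)]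
  constructor
  · rintro ⟨lam, hlam, hpos⟩
    exact ((signCompatible_of_mem_faceNormals β δ hlam) i).1 hpos
  · intro hi
    obtain ⟨lam, hlam, hne⟩ := exists_mem_faceNormals_inner_ne_zero δ hspan hi.ne'
    exact ⟨lam, hlam, (signCompatible_of_mem_faceNormals β δ hlam).inner_pos hi hne⟩

def upperVertex (u : V) : Fin d → ℝ := fun i => if ⟪u, β i⟫ ≤ 0 then 1 else 0

lemma mem_faceCoeffs_iff {u : V} {t : Fin d → ℝ} :
    t ∈ faceCoeffs β u ↔ ∃ a : Fin d → ℝ, (∀ j, a j ∈ Set.Icc (-(2⁻¹ : ℝ)) 0) ∧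
      (∀ j, ⟪u, β j⟫ ≠ 0 → a j = 0) ∧ upperVertex β u + (2 : ℝ) • a = t := by
  constructor
  · intro ht
    refine ⟨fun j => (t j - upperVertex β u j) / 2, fun j => ?_, fun j hj => ?_, ?_⟩
    · obtain ⟨⟨h0, h1⟩, hpos, hneg⟩ := ht j
      rcases lt_trichotomy ⟪u, β j⟫ 0 with h | h | h
      · simp [upperVertex, h.le, hneg h]
      · simp only [upperVertex, h, le_refl, if_true, Set.mem_Icc]
        constructor <;> linarith
      · simp [upperVertex, h.not_ge, hpos h]
    · obtain ⟨-, hpos, hneg⟩ := ht j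
      rcases lt_or_gt_of_ne hj with h | h
      · simp [upperVertex, h.le, hneg h]
      · simp [upperVertex, h.not_ge, hpos h]
    · ext j
      simp only [Pi.add_apply, Pi.smul_apply, smul_eq_mul]
      ring
  · rintro ⟨a, ha, hsupp, rfl⟩ j
    obtain ⟨h0, h1⟩ := ha j
    rcases lt_trichotomy ⟪u, β j⟫ 0 with h | h | h
    · simp [upperVertex, h, h.le, h.not_gt, hsupp j h.ne]
    · simp only [upperVertex, h, le_refl, if_true, lt_irrefl, Pi.add_apply, Pi.smul_apply,
        smul_eq_mul, Set.mem_Icc, IsEmpty.forall_iff, and_true]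
      constructor <;> linarith
    · simp [upperVertex, h, h.not_ge, h.not_gt, hsupp j h.ne']

lemma halfSigmaPoint_upperVertex_add {β : Fin d → V} (hsum : ∑ i, β i = 0) (u : V)
    (a : Fin d → ℝ) :
    halfSigmaPoint β δ (upperVertex β u + (2 : ℝ) • a) =
      δ - (2⁻¹ : ℝ) • ∑ i ∈ Finset.univ.filter (fun i => 0 < ⟪u, β i⟫), β i + ∑ i, a i • β i := by
  have hsplit := Finset.sum_filter_add_sum_filter_not Finset.univ (fun i => 0 < ⟪u, β i⟫) β
  have hupper : ∑ i, upperVertex β u i • β i =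
      ∑ i ∈ Finset.univ.filter (fun i => ¬ 0 < ⟪u, β i⟫), β i := by
    rw [Finset.sum_filter]
    exact Finset.sum_congr rfl fun i _ => by by_cases h : ⟪u, β i⟫ ≤ 0 <;> simp [upperVertex, h]
  simp only [halfSigmaPoint, Pi.add_apply, Pi.smul_apply, smul_eq_mul, add_smul,
    Finset.sum_add_distrib, hupper, mul_smul, ← Finset.smul_sum]
  rw [hsum] at hsplit
  rw [eq_neg_of_add_eq_zero_right hsplit]
  module

end MainTheorem

theorem statement6_general {d : ℕ} (β : Fin d → V) (hqs : QuasiSymmetric β)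
    (hspan : Submodule.span ℝ (Set.range β) = ⊤)
    (δ : V) (F : Set V)
    (hF : IsFaceOf (halfSigma β δ) F) :
    F = {x | ∃ a : Fin d → ℝ,
      (∀ j, a j ∈ Set.Icc (-(2⁻¹ : ℝ)) 0) ∧
      (∀ j, j ∉ WzeroIdx β (halfSigma β δ) F → a j = 0) ∧
      x = δ - (2⁻¹ : ℝ) • betaPlus β (halfSigma β δ) F + ∑ j, a j • β j} := by
  have : FiniteDimensional ℝ V :=
    Module.finite_def.2 (hspan ▸ Submodule.fg_span (Set.finite_range β))
  obtain ⟨u, rfl⟩ := hF.1.exists_eq_minFace hF.2.1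
  rw [betaPlus, WplusIdx_minFace β δ hspan u, WzeroIdx_minFace β δ hspan u]
  have hpoint := halfSigmaPoint_upperVertex_add δ hqs.sum_eq_zero_s6 u
  ext x
  simp only [mem_minFace_iff, mem_faceCoeffs_iff, Finset.mem_filter, Finset.mem_univ, true_and,
    Set.mem_ofPred_eq]
  constructor
  · rintro ⟨_, ⟨a, ha, hsupp, rfl⟩, rfl⟩
    exact ⟨a, ha, hsupp, hpoint a⟩
  · rintro ⟨a, ha, hsupp, rfl⟩
    exact ⟨_, ⟨a, ha, hsupp, rfl⟩, hpoint a⟩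

/-- Let `F` be a codimension-`k` face of `P = δ + (1/2)Σ`, where the weights
are quasi-symmetric and span `M_ℝ`.  Then
`F = { δ - (1/2)β_F^+ + Σ_{β_j ∈ 𝒲_F^0} a_j β_j : -1/2 ≤ a_j ≤ 0 }`. -/
theorem statement6 {d : ℕ} (β : Fin d → V) (hqs : QuasiSymmetric β)
    (hspan : Submodule.span ℝ (Set.range β) = ⊤)
    (δ : V) (k : ℕ) (F : Set V)
    (hF : IsFaceOf (halfSigma β δ) F) (hcodim : setCodim F = k) :
    F = {x | ∃ a : Fin d → ℝ,
      (∀ j, a j ∈ Set.Icc (-(2⁻¹ : ℝ)) 0) ∧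
      (∀ j, j ∉ WzeroIdx β (halfSigma β δ) F → a j = 0) ∧
      x = δ - (2⁻¹ : ℝ) • betaPlus β (halfSigma β δ) F + ∑ j, a j • β j} :=
  statement6_general β hqs hspan δ F hF
end
end

section
/- Let δ_0, δ_1, ..., δ_m be points off a locally finite hyperplane arrangement, forming a 'positive path' (each step crossing its separating hyperplanes in a consistent orientation). Then the path is minimal (i.e., d(δ_0,δ_m) = Σ_{i=1}^m d(δ_{i-1},δ_i)) if and only if the sets of separating hyperplanes 𝓗(δ_{i-1},δ_i) are pairwise disjoint, if and only if their union over all i equals 𝓗(δ_0,δ_m). -/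
/-!
Along the path, the sign of `f (δ i) - c` for a hyperplane `(f, c)` never vanishes and flips
exactly at the steps `i` with `(f, c) ∈ 𝓗(δ_{i-1}, δ_i)`. So `(f, c)` separates `δ_0` from `δ_m`
iff it lies in an odd number of the sets `𝓗(δ_{i-1}, δ_i)`. In particular `𝓗(δ_0, δ_m)` is
contained in their union, so `d(δ_0, δ_m) ≤ Σ d(δ_{i-1}, δ_i)` with equality iff the union is
disjoint and equals `𝓗(δ_0, δ_m)`; and disjointness alone gives that equality, since every
hyperplane of the union is then crossed exactly once. Local finiteness makes all these sets
finite: a hyperplane separating `x` and `y` meets the compact segment `[x, y]`.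
-/

noncomputable section

variable {V : Type} [NormedAddCommGroup V] [NormedSpace ℝ V]

/-- A hyperplane arrangement: a set of affine hyperplanes, each encoded by a pair `(f, c)` of
a nonzero linear functional and a constant, the hyperplane being `{x | f x = c}`. -/
def IsArrangement (𝓐 : Set ((V →ₗ[ℝ] ℝ) × ℝ)) : Prop :=
  ∀ H ∈ 𝓐, H.1 ≠ 0

/-- Local finiteness of the arrangement. -/
def LocallyFiniteArrangement (𝓐 : Set ((V →ₗ[ℝ] ℝ) × ℝ)) : Prop :=
  ∀ x : V, ∃ U ∈ nhds x, {H ∈ 𝓐 | ∃ y ∈ U, H.1 y = H.2}.Finite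

/-- A point not lying on any hyperplane of the arrangement. -/
def OffArrangement (𝓐 : Set ((V →ₗ[ℝ] ℝ) × ℝ)) (x : V) : Prop :=
  ∀ H ∈ 𝓐, H.1 x ≠ H.2

/-- `𝓗(δ, δ')`: the set of hyperplanes of `𝓐` separating `δ` and `δ'`. -/
def sepHyp (𝓐 : Set ((V →ₗ[ℝ] ℝ) × ℝ)) (x y : V) : Set ((V →ₗ[ℝ] ℝ) × ℝ) :=
  {H ∈ 𝓐 | (H.1 x - H.2) * (H.1 y - H.2) < 0}

open scoped Function

theorem Set.ncard_iUnion_eq_sum_iff {α ι : Type*} [Fintype ι] {A : ι → Set α}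
    (hA : ∀ i, (A i).Finite) :
    (⋃ i, A i).ncard = ∑ i, (A i).ncard ↔ Pairwise (Disjoint on A) := by
  classical
  refine ⟨fun h => ?_, fun h => by
    rw [Set.ncard_iUnion_of_finite hA h, finsum_eq_sum_of_fintype]⟩
  by_contra hA'
  obtain ⟨i, j, hij, hnd⟩ : ∃ i j, i ≠ j ∧ ¬Disjoint (A i) (A j) := by
    simpa [Pairwise, Function.onFun] using hA'
  set B := ⋃ k ∈ Finset.univ.erase i, A k
  have hB : B.Finite := Set.Finite.biUnion (Finset.finite_toSet _) fun k _ => hA k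
  have hAB : ¬Disjoint (A i) B :=
    fun hd => hnd (hd.mono_right (Set.subset_biUnion_of_mem (u := A)
      (Finset.mem_coe.2 (Finset.mem_erase.2 ⟨hij.symm, Finset.mem_univ j⟩))))
  have : (⋃ k, A k).ncard < ∑ k, (A k).ncard :=
    calc (⋃ k, A k).ncard = (A i ∪ B).ncard := by
          rw [← Finset.set_biUnion_insert, Finset.insert_erase (Finset.mem_univ i)]; simp
      _ < (A i).ncard + B.ncard := Set.ncard_union_lt (hA i) hB hAB
      _ ≤ (A i).ncard + ∑ k ∈ Finset.univ.erase i, (A k).ncard := by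
          gcongr; exact Finset.set_ncard_biUnion_le _ _
      _ = ∑ k, (A k).ncard := Finset.add_sum_erase _ (fun k => (A k).ncard) (Finset.mem_univ i)
  omega

theorem Set.ncard_eq_sum_ncard_iff_of_subset_iUnion {α ι : Type*} [Fintype ι] {T : Set α}
    {A : ι → Set α} (hA : ∀ i, (A i).Finite) (hT : T ⊆ ⋃ i, A i) :
    T.ncard = ∑ i, (A i).ncard ↔ T = ⋃ i, A i ∧ Pairwise (Disjoint on A) := by
  have hU : (⋃ i, A i).Finite := Set.finite_iUnion hA
  have hTU := Set.ncard_le_ncard hT hU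
  have hUsum := Set.ncard_iUnion_le_of_fintype A
  constructor
  · intro h
    exact ⟨Set.eq_of_subset_of_ncard_le hT (by omega) hU,
      (Set.ncard_iUnion_eq_sum_iff hA).1 (by omega)⟩
  · rintro ⟨rfl, hd⟩
    exact (Set.ncard_iUnion_eq_sum_iff hA).2 hd

theorem exists_mem_segment_apply_eq_of_mul_neg {f : V →ₗ[ℝ] ℝ} {c : ℝ} {x y : V}
    (h : (f x - c) * (f y - c) < 0) : ∃ p ∈ segment ℝ x y, f p = c := by
  have hc : c ∈ segment ℝ (f x) (f y) := by
    rw [segment_eq_uIcc, Set.mem_uIcc]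
    rcases mul_neg_iff.1 h with ⟨hx, hy⟩ | ⟨hx, hy⟩
    · exact Or.inr ⟨by linarith, by linarith⟩
    · exact Or.inl ⟨by linarith, by linarith⟩
  rwa [← f.coe_toAffineMap, ← image_segment] at hc

theorem sepHyp_finite {𝓐 : Set ((V →ₗ[ℝ] ℝ) × ℝ)} (hlf : LocallyFiniteArrangement 𝓐)
    (x y : V) : (sepHyp 𝓐 x y).Finite := by
  choose U hU hfin using hlf
  have hseg : IsCompact (segment ℝ x y) := by
    rw [segment_eq_image_lineMap]
    exact isCompact_Icc.image AffineMap.lineMap_continuous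
  obtain ⟨t, -, hcov⟩ := hseg.elim_nhds_subcover U fun z _ => hU z
  refine (t.finite_toSet.biUnion fun z _ => hfin z).subset ?_
  rintro H ⟨hH, hsep⟩
  obtain ⟨p, hp, hpH⟩ := exists_mem_segment_apply_eq_of_mul_neg hsep
  obtain ⟨z, hz, hpz⟩ := Set.mem_iUnion₂.1 (hcov hp)
  exact Set.mem_biUnion hz ⟨hH, p, hpz, hpH⟩

section SignChanges

variable {R : Type*} [CommRing R] [LinearOrder R] [IsStrictOrderedRing R]

theorem mul_neg_iff_of_mul_neg {a b c : R} (hab : a * b < 0) (hc : c ≠ 0) :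
    a * c < 0 ↔ ¬ b * c < 0 := by
  have : 0 < c * c := mul_self_pos.2 hc
  constructor
  · intro h h'; nlinarith [mul_pos_of_neg_of_neg h h']
  · intro h; push Not at h; nlinarith

theorem mul_neg_iff_of_mul_pos {a b c : R} (hab : 0 < a * b) (hc : c ≠ 0) :
    a * c < 0 ↔ b * c < 0 := by
  have : 0 < c * c := mul_self_pos.2 hc
  constructor
  · intro h; by_contra h'; push Not at h'; nlinarith
  · intro h; by_contra h'; push Not at h'; nlinarith

open Finset in
theorem mul_neg_iff_odd_card_sign_changes {m : ℕ} (s : Fin (m + 1) → R) (hs : ∀ i, s i ≠ 0) :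
    s 0 * s (Fin.last m) < 0 ↔ Odd #{i : Fin m | s i.castSucc * s i.succ < 0} := by
  induction m with
  | zero => simp [mul_self_nonneg]
  | succ m ih =>
    specialize ih (fun i => s i.succ) (fun i => hs _)
    simp only [Fin.succ_castSucc, Fin.succ_last, Fin.succ_zero_eq_one] at ih
    rw [Fin.card_filter_univ_succ]
    split_ifs with h01
    · rw [Nat.odd_add_one, ← ih]
      exact mul_neg_iff_of_mul_neg h01 (hs _)
    · rw [← ih]
      exact mul_neg_iff_of_mul_pos ((mul_ne_zero (hs 0) (hs 1)).lt_of_le' (not_lt.1 h01)) (hs _)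

end SignChanges

section Path

variable {𝓐 : Set ((V →ₗ[ℝ] ℝ) × ℝ)} {m : ℕ} {δ : Fin (m + 1) → V}

open Classical Finset in
theorem mem_sepHyp_iff_odd_card (hoff : ∀ i, OffArrangement 𝓐 (δ i))
    {H : (V →ₗ[ℝ] ℝ) × ℝ} (hH : H ∈ 𝓐) :
    H ∈ sepHyp 𝓐 (δ 0) (δ (Fin.last m)) ↔
      Odd #{i : Fin m | H ∈ sepHyp 𝓐 (δ i.castSucc) (δ i.succ)} := by
  simp only [sepHyp, Set.mem_ofPred_eq, hH, true_and]
  exact mul_neg_iff_odd_card_sign_changes (fun i => H.1 (δ i) - H.2)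
    fun i => sub_ne_zero.2 (hoff i H hH)

theorem sepHyp_subset_iUnion_sepHyp (hoff : ∀ i, OffArrangement 𝓐 (δ i)) :
    sepHyp 𝓐 (δ 0) (δ (Fin.last m)) ⊆ ⋃ i : Fin m, sepHyp 𝓐 (δ i.castSucc) (δ i.succ) := by
  classical
  intro H hH
  obtain ⟨i, hi⟩ := Finset.card_pos.1 ((mem_sepHyp_iff_odd_card hoff hH.1).1 hH).pos
  exact Set.mem_iUnion.2 ⟨i, (Finset.mem_filter.1 hi).2⟩

open Finset in
theorem iUnion_sepHyp_subset_sepHyp (hoff : ∀ i, OffArrangement 𝓐 (δ i))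
    (hd : Pairwise (Disjoint on fun i : Fin m => sepHyp 𝓐 (δ i.castSucc) (δ i.succ))) :
    ⋃ i : Fin m, sepHyp 𝓐 (δ i.castSucc) (δ i.succ) ⊆ sepHyp 𝓐 (δ 0) (δ (Fin.last m)) := by
  classical
  intro H hH
  obtain ⟨i, hi⟩ := Set.mem_iUnion.1 hH
  have hsingle : #{j : Fin m | H ∈ sepHyp 𝓐 (δ j.castSucc) (δ j.succ)} = 1 :=
    card_eq_one.2 ⟨i, eq_singleton_iff_unique_mem.2 ⟨mem_filter.2 ⟨mem_univ i, hi⟩,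
      fun j hj => by_contra fun hji => Set.disjoint_left.1 (hd hji) (mem_filter.1 hj).2 hi⟩⟩
  exact (mem_sepHyp_iff_odd_card hoff hi.1).2 (hsingle ▸ odd_one)

end Path

theorem statement9_general (𝓐 : Set ((V →ₗ[ℝ] ℝ) × ℝ))
    (hlf : LocallyFiniteArrangement 𝓐)
    (m : ℕ) (δ : Fin (m + 1) → V)
    (hoff : ∀ i, OffArrangement 𝓐 (δ i)) :
    ((sepHyp 𝓐 (δ 0) (δ (Fin.last m))).ncard =
        ∑ i : Fin m, (sepHyp 𝓐 (δ i.castSucc) (δ i.succ)).ncard ↔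
      ∀ i j : Fin m, i ≠ j →
        Disjoint (sepHyp 𝓐 (δ i.castSucc) (δ i.succ))
          (sepHyp 𝓐 (δ j.castSucc) (δ j.succ))) ∧
    ((sepHyp 𝓐 (δ 0) (δ (Fin.last m))).ncard =
        ∑ i : Fin m, (sepHyp 𝓐 (δ i.castSucc) (δ i.succ)).ncard ↔
      (sepHyp 𝓐 (δ 0) (δ (Fin.last m)) =
          ⋃ i : Fin m, sepHyp 𝓐 (δ i.castSucc) (δ i.succ)) ∧
        ∀ i j : Fin m, i ≠ j →
          Disjoint (sepHyp 𝓐 (δ i.castSucc) (δ i.succ))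
            (sepHyp 𝓐 (δ j.castSucc) (δ j.succ))) := by
  have hcount := Set.ncard_eq_sum_ncard_iff_of_subset_iUnion
    (fun i : Fin m => sepHyp_finite hlf (δ i.castSucc) (δ i.succ))
    (sepHyp_subset_iUnion_sepHyp hoff)
  refine ⟨⟨fun h => (hcount.1 h).2, fun hd => hcount.2 ⟨?_, hd⟩⟩, hcount⟩
  exact (sepHyp_subset_iUnion_sepHyp hoff).antisymm (iUnion_sepHyp_subset_sepHyp hoff hd)

/-- Let `δ_0, …, δ_m` be points off a locally finite arrangement forming a
positive path (each step `δ_{i-1} → δ_i` crosses at least one wall, with a generic label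
`ℓ_i` oriented consistently with `δ_i - δ_{i-1}` on every hyperplane separating `δ_{i-1}`
and `δ_i`).  Then the path is minimal, i.e.
`d(δ_0, δ_m) = Σ_{i=1}^m d(δ_{i-1}, δ_i)`, if and only if the separating sets
`𝓗(δ_{i-1}, δ_i)` are pairwise disjoint, if and only if
`𝓗(δ_0, δ_m)` equals their (disjoint) union. -/
theorem statement9 (𝓐 : Set ((V →ₗ[ℝ] ℝ) × ℝ)) (h𝓐 : IsArrangement 𝓐)
    (hlf : LocallyFiniteArrangement 𝓐)
    (m : ℕ) (δ : Fin (m + 1) → V) (ℓ : Fin m → V)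
    (hoff : ∀ i, OffArrangement 𝓐 (δ i))
    (hgen : ∀ i, ∀ H ∈ 𝓐, H.1 (ℓ i) ≠ 0)
    (hpos : ∀ i : Fin m, (sepHyp 𝓐 (δ i.castSucc) (δ i.succ)).Nonempty ∧
      ∀ H ∈ sepHyp 𝓐 (δ i.castSucc) (δ i.succ),
        0 < H.1 (ℓ i) * (H.1 (δ i.succ) - H.1 (δ i.castSucc))) :
    ((sepHyp 𝓐 (δ 0) (δ (Fin.last m))).ncard =
        ∑ i : Fin m, (sepHyp 𝓐 (δ i.castSucc) (δ i.succ)).ncard ↔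
      ∀ i j : Fin m, i ≠ j →
        Disjoint (sepHyp 𝓐 (δ i.castSucc) (δ i.succ))
          (sepHyp 𝓐 (δ j.castSucc) (δ j.succ))) ∧
    ((sepHyp 𝓐 (δ 0) (δ (Fin.last m))).ncard =
        ∑ i : Fin m, (sepHyp 𝓐 (δ i.castSucc) (δ i.succ)).ncard ↔
      (sepHyp 𝓐 (δ 0) (δ (Fin.last m)) =
          ⋃ i : Fin m, sepHyp 𝓐 (δ i.castSucc) (δ i.succ)) ∧
        ∀ i j : Fin m, i ≠ j →
          Disjoint (sepHyp 𝓐 (δ i.castSucc) (δ i.succ))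
            (sepHyp 𝓐 (δ j.castSucc) (δ j.succ))) :=
  statement9_general 𝓐 hlf m δ hoff
end
end

section
/- Let δ, δ' be an adjacent pair in M_ℝ^W \ 𝓗^W separated by a single wall with crossing point δ_0, and let χ ∈ 𝒞_δ = (δ + ∇) ∩ M^+. Then χ ∉ 𝒞_{δ'} if and only if χ lies on the boundary ∂(δ_0 + ∇). -/
/-!
Follow the point `χ` through the moving window: `y t := χ - (δ + t • (δ' - δ))` lies in `∇`
exactly when `χ` lies in the `t`-th translate. Off the wall crossing `t₀`, the lattice point `χ`
never sits on the boundary of a translate, so `y 0` is interior to `∇`. If `y t₀` is not on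
`∂∇` either, then the path `y` on `[0, 1]` never meets `∂∇`, and by connectedness stays inside
`∇`, so `χ ∈ δ' + ∇`. Conversely, if `χ ∈ δ' + ∇` as well, then `y t₀` is a proper convex
combination of the interior point `y 0` and the point `y 1 ∈ ∇`, hence interior.
-/

open scoped Pointwise

open Set

section Translate

variable {G : Type*} [AddCommGroup G]

theorem mem_vadd_set_iff_sub_mem {a x : G} {s : Set G} : x ∈ a +ᵥ s ↔ x - a ∈ s := by
  rw [mem_vadd_set_iff_neg_vadd_mem, vadd_eq_add, neg_add_eq_sub]

variable [TopologicalSpace G] [ContinuousAdd G]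

theorem frontier_vadd (a : G) (s : Set G) : frontier (a +ᵥ s) = a +ᵥ frontier s :=
  ((Homeomorph.addLeft a).image_frontier s).symm

theorem mem_frontier_vadd_set_iff_sub_mem {a x : G} {s : Set G} :
    x ∈ frontier (a +ᵥ s) ↔ x - a ∈ frontier s := by
  rw [frontier_vadd, mem_vadd_set_iff_sub_mem]

end Translate

theorem IsPreconnected.subset_interior_of_disjoint_frontier {X : Type*} [TopologicalSpace X]
    {S s : Set X} (hS : IsPreconnected S) (hne : (S ∩ s).Nonempty)
    (hfr : Disjoint S (frontier s)) : S ⊆ interior s := by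
  have hcover : S ⊆ interior s ∪ (closure s)ᶜ := fun x hx ↦ by
    by_cases hcl : x ∈ closure s
    · exact .inl (by_contra fun hint ↦ hfr.notMem_of_mem_left hx ⟨hcl, hint⟩)
    · exact .inr hcl
  obtain ⟨x, hxS, hxs⟩ := hne
  refine hS.subset_left_of_subset_union isOpen_interior isClosed_closure.isOpen_compl
    (disjoint_compl_right.mono_left interior_subset_closure) hcover ⟨x, hxS, ?_⟩
  exact (hcover hxS).resolve_right (not_not.2 (subset_closure hxs))

theorem statement11_general {V : Type} [NormedAddCommGroup V] [NormedSpace ℝ V]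
    (M : AddSubgroup V) (Mplus : Set V) (hMplus : Mplus ⊆ (M : Set V))
    (nabla : Set V) (hconv : Convex ℝ nabla)
    (δ δ' δ₀ : V) (t₀ : ℝ) (ht₀ : t₀ ∈ Set.Ioo (0 : ℝ) 1)
    (hδ₀ : δ₀ = δ + t₀ • (δ' - δ))
    (hadj : ∀ t ∈ Set.Icc (0 : ℝ) 1, t ≠ t₀ →
      ∀ x ∈ frontier ((δ + t • (δ' - δ)) +ᵥ nabla), x ∉ (M : Set V))
    (χ : V) (hχ : χ ∈ (δ +ᵥ nabla) ∩ Mplus) :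
    χ ∉ (δ' +ᵥ nabla) ∩ Mplus ↔ χ ∈ frontier (δ₀ +ᵥ nabla) := by
  obtain ⟨hχδ, hχplus⟩ := hχ
  set y : ℝ → V := fun t ↦ χ - (δ + t • (δ' - δ))
  have hy_frontier : ∀ t ∈ Icc (0 : ℝ) 1, t ≠ t₀ → y t ∉ frontier nabla := fun t ht hne hyt ↦
    hadj t ht hne χ (mem_frontier_vadd_set_iff_sub_mem.2 hyt) (hMplus hχplus)
  have hy₀ : y 0 ∈ interior nabla := by
    rw [← self_sdiff_frontier]
    exact ⟨by simpa [y] using mem_vadd_set_iff_sub_mem.1 hχδ,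
      hy_frontier 0 (left_mem_Icc.2 zero_le_one) ht₀.1.ne⟩
  rw [mem_frontier_vadd_set_iff_sub_mem, show χ - δ₀ = y t₀ by rw [hδ₀]]
  constructor
  · intro hχδ'
    by_contra hyt₀
    have hpath : y '' Icc 0 1 ⊆ interior nabla := by
      refine (isPreconnected_Icc.image y (by fun_prop)).subset_interior_of_disjoint_frontier
        ⟨y 0, mem_image_of_mem y (left_mem_Icc.2 zero_le_one), interior_subset hy₀⟩ ?_
      refine disjoint_left.2 ?_
      rintro _ ⟨t, ht, rfl⟩
      rcases eq_or_ne t t₀ with rfl | hne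
      exacts [hyt₀, hy_frontier t ht hne]
    have hy₁ : y 1 ∈ nabla :=
      interior_subset (hpath (mem_image_of_mem y (right_mem_Icc.2 zero_le_one)))
    exact hχδ' ⟨mem_vadd_set_iff_sub_mem.2 (by simpa [y] using hy₁), hχplus⟩
  · rintro hyt₀ ⟨hχδ', -⟩
    have hy₁ : y 1 ∈ nabla := by simpa [y] using mem_vadd_set_iff_sub_mem.1 hχδ'
    have hcombo : y t₀ = (1 - t₀) • y 0 + t₀ • y 1 := by simp only [y]; module
    exact hyt₀.2 (hcombo ▸ hconv.combo_interior_self_mem_interior hy₀ hy₁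
      (sub_pos.2 ht₀.2) ht₀.1.le (sub_add_cancel 1 t₀))

/-- Let `∇` be the (compact convex) magic-window polytope in `M_ℝ`, `M` the
weight lattice and `M^+` the set of dominant weights.  Recall that `δ ∈ M_ℝ^W ∖ 𝓗^W` iff
`∂(δ + ∇)` contains no lattice point.  Let `(δ, δ')` be an adjacent pair: both lie off
`𝓗^W`, and the segment from `δ` to `δ'` meets `𝓗^W` in the single point
`δ₀ = δ + t₀(δ' - δ)` (every other point `δ + t(δ' - δ)`, `t ∈ [0,1]`, is off `𝓗^W`, i.e.
the boundary of its translate of `∇` contains no lattice point).  Then for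
`χ ∈ 𝒞_δ = (δ + ∇) ∩ M^+` one has: `χ ∉ 𝒞_{δ'}` iff `χ ∈ ∂(δ₀ + ∇)`. -/
theorem statement11 {V : Type} [NormedAddCommGroup V] [NormedSpace ℝ V]
    (M : AddSubgroup V) (Mplus : Set V) (hMplus : Mplus ⊆ (M : Set V))
    (nabla : Set V) (hconv : Convex ℝ nabla) (hcomp : IsCompact nabla)
    (δ δ' δ₀ : V) (t₀ : ℝ) (ht₀ : t₀ ∈ Set.Ioo (0 : ℝ) 1)
    (hδ₀ : δ₀ = δ + t₀ • (δ' - δ))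
    (hadj : ∀ t ∈ Set.Icc (0 : ℝ) 1, t ≠ t₀ →
      ∀ x ∈ frontier ((δ + t • (δ' - δ)) +ᵥ nabla), x ∉ (M : Set V))
    (χ : V) (hχ : χ ∈ (δ +ᵥ nabla) ∩ Mplus) :
    χ ∉ (δ' +ᵥ nabla) ∩ Mplus ↔ χ ∈ frontier (δ₀ +ᵥ nabla) :=
  statement11_general M Mplus hMplus nabla hconv δ δ' δ₀ t₀ ht₀ hδ₀ hadj χ hχ
end
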